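/- Let q ≥ 1, let Σ be a symmetric positive definite q×q real matrix, and let a > 0 and b > 0. Then ∫_{ℝ^q} x xᵀ · p_eg(x; Σ, a, b) dx = (a·b/q) · Σ (entrywise equality of q×q matrices). In particular, if b = q/a then the covariance matrix of the elliptical gamma distribution equals Σ. -/

import Mathlib

open Matrix Classical

/-- Principal (symmetric positive semidefinite) square root of a matrix;
junk value `0` if the matrix is not positive semidefinite. -/
noncomputable def matSqrt {q : ℕ} (A : Matrix (Fin q) (Fin q) ℝ) : Matrix (Fin q) (Fin q) ℝ :=
  if h : A.PosSemidef then
    h.1.eigenvectorUnitary.1 * diagonal ((↑) ∘ (h.1.eigenvalues · |>.sqrt)) *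
      (star h.1.eigenvectorUnitary : Matrix (Fin q) (Fin q) ℝ)
  else 0

/-- Loewner order: `loewnerLE A B` iff `B - A` is positive semidefinite. -/
def loewnerLE {q : ℕ} (A B : Matrix (Fin q) (Fin q) ℝ) : Prop := (B - A).PosSemidef

/-- Largest eigenvalue of a (Hermitian) matrix; junk value `0` otherwise. -/
noncomputable def maxEig {q : ℕ} (A : Matrix (Fin q) (Fin q) ℝ) : ℝ :=
  if h : A.IsHermitian then ⨆ i, h.eigenvalues i else 0

/-- Smallest eigenvalue of a (Hermitian) matrix; junk value `0` otherwise. -/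
noncomputable def minEig {q : ℕ} (A : Matrix (Fin q) (Fin q) ℝ) : ℝ :=
  if h : A.IsHermitian then ⨅ i, h.eigenvalues i else 0

/-- The elliptical gamma density
`p_eg(x; Σ, a, b) = Γ(q/2) / (π^(q/2) Γ(a) b^a det(Σ)^(1/2)) (xᵀΣ⁻¹x)^(a-q/2) exp(-xᵀΣ⁻¹x/b)`. -/
noncomputable def pEG {q : ℕ} (S : Matrix (Fin q) (Fin q) ℝ) (a b : ℝ) (x : Fin q → ℝ) : ℝ :=
  Real.Gamma ((q : ℝ) / 2) /
    (Real.pi ^ ((q : ℝ) / 2) * Real.Gamma a * b ^ a * S.det ^ ((1 : ℝ) / 2)) *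
    (x ⬝ᵥ S⁻¹ *ᵥ x) ^ (a - (q : ℝ) / 2) * Real.exp (-(x ⬝ᵥ S⁻¹ *ᵥ x) / b)

/-!
Write `Σ = B Bᵀ` and substitute `x = B y`: the quadratic form `xᵀ Σ⁻¹ x` becomes `yᵀ y`, and the
Jacobian `|det B| = √(det Σ)` cancels the determinant in the normalising constant. For a radial
integrand `f (yᵀ y)` the second moments are isotropic: flipping the sign of one coordinate kills
`∫ y_k y_l f`, `k ≠ l`, and swapping two coordinates equates the diagonal ones, so
`∫ (B y)_i (B y)_j f = (B Bᵀ)_ij / q · ∫ yᵀ y f`. In polar coordinates the last integral is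
`π^(q/2) b^(a+1) Γ(a+1) / Γ(q/2)`, and against the normalising constant this leaves `a b / q`.
-/

open MeasureTheory Set Real

namespace Matrix

variable {ι : Type*} [Fintype ι]

theorem PosSemidef.exists_eq_mul_transpose {S : Matrix ι ι ℝ} (hS : S.PosSemidef) :
    ∃ B : Matrix ι ι ℝ, S = B * Bᵀ := by
  open scoped MatrixOrder in
  obtain ⟨C, hC⟩ := CStarAlgebra.nonneg_iff_eq_star_mul_self.mp hS.nonneg
  exact ⟨Cᵀ, by simpa [star_eq_conjTranspose] using hC⟩

theorem dotProduct_inv_mulVec_of_eq_mul_transpose [DecidableEq ι] {S B : Matrix ι ι ℝ}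
    (hB : IsUnit B.det) (hS : S = B * Bᵀ) (y : ι → ℝ) :
    (B *ᵥ y) ⬝ᵥ S⁻¹ *ᵥ (B *ᵥ y) = y ⬝ᵥ y := by
  have hBt : IsUnit Bᵀ.det := by rwa [det_transpose]
  rw [hS, mul_inv_rev, mulVec_mulVec, Matrix.mul_assoc, nonsing_inv_mul _ hB, Matrix.mul_one,
    dotProduct_mulVec, vecMul_mulVec, ← mulVec_transpose, mul_nonsing_inv _ hBt, transpose_one,
    one_mulVec]

theorem integral_eq_abs_det_mul_integral_comp_mulVec [DecidableEq ι] (M : Matrix ι ι ℝ)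
    (hM : M.det ≠ 0) (g : (ι → ℝ) → ℝ) :
    ∫ x, g x = |M.det| * ∫ y, g (M *ᵥ y) := by
  let e : (ι → ℝ) ≃ᵐ (ι → ℝ) :=
    (M.toLinearEquiv' (M.invertibleOfIsUnitDet hM.isUnit)).toContinuousLinearEquiv
      |>.toHomeomorph.toMeasurableEquiv
  have hdet : LinearMap.det (toLin' M) = M.det := LinearMap.det_toLin' M
  have hmap : Measure.map e volume = ENNReal.ofReal |M.det⁻¹| • volume := by
    rw [← hdet]
    exact Measure.map_linearMap_addHaar_pi_eq_smul_addHaar (hdet ▸ hM) volume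
  have := integral_map_equiv (μ := volume) e g
  rw [hmap, integral_smul_measure, ENNReal.toReal_ofReal (abs_nonneg _), smul_eq_mul] at this
  rw [show (∫ y, g (M *ᵥ y)) = ∫ y, g (e y) from rfl, ← this, abs_inv,
    mul_inv_cancel_left₀ (abs_ne_zero.mpr hM)]

theorem integral_comp_mulVec_of_abs_det_eq_one [DecidableEq ι] (M : Matrix ι ι ℝ)
    (hM : |M.det| = 1) (g : (ι → ℝ) → ℝ) :
    ∫ y, g (M *ᵥ y) = ∫ y, g y := by
  rw [integral_eq_abs_det_mul_integral_comp_mulVec M (by simp [← abs_ne_zero, hM]) g, hM, one_mul]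

theorem integral_mul_mul_comp_dotProduct_self_of_ne {k l : ι} (hkl : k ≠ l) (g : ℝ → ℝ) :
    ∫ y : ι → ℝ, y k * y l * g (y ⬝ᵥ y) = 0 := by
  let D : Matrix ι ι ℝ := diagonal fun m => if m = k then -1 else 1
  have hD : |D.det| = 1 := by simp [D, det_diagonal, Finset.prod_ite_eq']
  have hreflect : ∀ y : ι → ℝ, (D *ᵥ y) ⬝ᵥ (D *ᵥ y) = y ⬝ᵥ y := fun y => by
    simp only [D, dotProduct, mulVec_diagonal]
    exact Finset.sum_congr rfl fun m _ => by split_ifs <;> ring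
  have := integral_comp_mulVec_of_abs_det_eq_one D hD fun y => y k * y l * g (y ⬝ᵥ y)
  simp only [hreflect, D, mulVec_diagonal, ↓reduceIte, if_neg hkl.symm, one_mul,
    neg_mul, integral_neg] at this
  linarith

theorem integral_mul_self_comp_dotProduct_self_eq (k l : ι) (g : ℝ → ℝ) :
    ∫ y : ι → ℝ, y k * y k * g (y ⬝ᵥ y) = ∫ y : ι → ℝ, y l * y l * g (y ⬝ᵥ y) := by
  let P : Matrix ι ι ℝ := (Equiv.swap k l).permMatrix ℝ
  have hP : |P.det| = 1 := by
    rcases Int.units_eq_one_or (Equiv.Perm.sign (Equiv.swap k l)) with h | h <;> simp [P, h]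
  have hpermute : ∀ y : ι → ℝ, (y ∘ Equiv.swap k l) ⬝ᵥ (y ∘ Equiv.swap k l) = y ⬝ᵥ y :=
    fun y => Equiv.sum_comp (Equiv.swap k l) fun m => y m * y m
  have := integral_comp_mulVec_of_abs_det_eq_one P hP fun y => y k * y k * g (y ⬝ᵥ y)
  simpa only [P, permMatrix_mulVec, hpermute, Function.comp_apply, Equiv.swap_apply_left]
    using this.symm

variable {g : ℝ → ℝ}

theorem integrable_mul_mul_comp_dotProduct_self (hg : Measurable g)
    (hint : Integrable fun y : ι → ℝ => (y ⬝ᵥ y) * g (y ⬝ᵥ y)) (k l : ι) :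
    Integrable fun y : ι → ℝ => y k * y l * g (y ⬝ᵥ y) := by
  have hgm : Measurable fun y : ι → ℝ => g (y ⬝ᵥ y) :=
    hg.comp (continuous_id.dotProduct continuous_id).measurable
  refine hint.mono
    (((measurable_pi_apply k).mul (measurable_pi_apply l)).mul hgm).aestronglyMeasurable
    (Filter.Eventually.of_forall fun y => ?_)
  have hle : ∀ m, y m * y m ≤ y ⬝ᵥ y := fun m =>
    Finset.single_le_sum (f := fun m => y m * y m) (fun _ _ => mul_self_nonneg _)
      (Finset.mem_univ m)
  have hkl : |y k * y l| ≤ y ⬝ᵥ y := by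
    rw [abs_mul]
    nlinarith [hle k, hle l, abs_mul_abs_self (y k), abs_mul_abs_self (y l),
      sq_nonneg (|y k| - |y l|)]
  rw [norm_mul, norm_mul (y ⬝ᵥ y), Real.norm_eq_abs, Real.norm_eq_abs]
  exact mul_le_mul_of_nonneg_right (hkl.trans (le_abs_self _)) (abs_nonneg _)

theorem integral_mul_self_comp_dotProduct_self (hg : Measurable g)
    (hint : Integrable fun y : ι → ℝ => (y ⬝ᵥ y) * g (y ⬝ᵥ y)) (k : ι) :
    ∫ y : ι → ℝ, y k * y k * g (y ⬝ᵥ y) =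
      (∫ y : ι → ℝ, (y ⬝ᵥ y) * g (y ⬝ᵥ y)) / Fintype.card ι := by
  have hsum : ∫ y : ι → ℝ, (y ⬝ᵥ y) * g (y ⬝ᵥ y) =
      ∑ m, ∫ y : ι → ℝ, y m * y m * g (y ⬝ᵥ y) := by
    rw [← integral_finsetSum _ fun m _ => integrable_mul_mul_comp_dotProduct_self hg hint m m]
    simp only [dotProduct, Finset.sum_mul]
  have hcard : (Fintype.card ι : ℝ) ≠ 0 := by
    have : Nonempty ι := ⟨k⟩
    exact_mod_cast Fintype.card_ne_zero
  rw [hsum, Finset.sum_congr rfl fun m _ => integral_mul_self_comp_dotProduct_self_eq m k g,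
    Finset.sum_const, Finset.card_univ, nsmul_eq_mul, mul_div_cancel_left₀ _ hcard]

theorem integral_mulVec_mul_mulVec_comp_dotProduct_self (hg : Measurable g)
    (hint : Integrable fun y : ι → ℝ => (y ⬝ᵥ y) * g (y ⬝ᵥ y)) (B : Matrix ι ι ℝ) (i j : ι) :
    ∫ y : ι → ℝ, (B *ᵥ y) i * (B *ᵥ y) j * g (y ⬝ᵥ y) =
      (B * Bᵀ) i j * (∫ y : ι → ℝ, (y ⬝ᵥ y) * g (y ⬝ᵥ y)) / Fintype.card ι := by
  have hexpand : ∀ y : ι → ℝ, (B *ᵥ y) i * (B *ᵥ y) j * g (y ⬝ᵥ y) =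
      ∑ k, ∑ l, B i k * B j l * (y k * y l * g (y ⬝ᵥ y)) := fun y => by
    simp only [mulVec, dotProduct]
    rw [Finset.sum_mul_sum, Finset.sum_mul]
    refine Finset.sum_congr rfl fun k _ => ?_
    rw [Finset.sum_mul]
    exact Finset.sum_congr rfl fun l _ => by ring
  have hint' := integrable_mul_mul_comp_dotProduct_self hg hint
  simp only [hexpand]
  rw [integral_finsetSum _ fun k _ => integrable_finsetSum _ fun l _ => (hint' k l).const_mul _]
  rw [mul_apply, Finset.sum_mul, Finset.sum_div]
  refine Finset.sum_congr rfl fun k _ => ?_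
  simp only [integral_finsetSum _ fun l _ => (hint' k l).const_mul (B i k * B j l),
    integral_const_mul]
  rw [Finset.sum_eq_single k (fun l _ hlk => by
      rw [integral_mul_mul_comp_dotProduct_self_of_ne (Ne.symm hlk), mul_zero])
    (by simp), integral_mul_self_comp_dotProduct_self hg hint, transpose_apply]
  ring

theorem PosDef.integral_mul_mul_comp_dotProduct_inv_mulVec [DecidableEq ι] {S : Matrix ι ι ℝ}
    (hS : S.PosDef) (hg : Measurable g)
    (hint : Integrable fun y : ι → ℝ => (y ⬝ᵥ y) * g (y ⬝ᵥ y)) (i j : ι) :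
    ∫ x : ι → ℝ, x i * x j * g (x ⬝ᵥ S⁻¹ *ᵥ x) =
      √S.det * S i j * (∫ y : ι → ℝ, (y ⬝ᵥ y) * g (y ⬝ᵥ y)) / Fintype.card ι := by
  obtain ⟨B, hSB⟩ := hS.posSemidef.exists_eq_mul_transpose
  have hdet : S.det = B.det * B.det := by rw [hSB, det_mul, det_transpose]
  have hB : B.det ≠ 0 := fun h => hS.det_pos.ne' (by rw [hdet, h, zero_mul])
  rw [integral_eq_abs_det_mul_integral_comp_mulVec B hB]
  simp only [dotProduct_inv_mulVec_of_eq_mul_transpose hB.isUnit hSB]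
  rw [integral_mulVec_mul_mulVec_comp_dotProduct_self hg hint, ← hSB, hdet,
    Real.sqrt_mul_self_eq_abs]
  ring

end Matrix

theorem integral_rpow_mul_exp_neg_sq_div_Ioi {b c : ℝ} (hb : 0 < b) (hc : 0 < c) :
    ∫ r in Ioi (0 : ℝ), r ^ (2 * c - 1) * exp (-r ^ 2 / b) = b ^ c * Gamma c / 2 := by
  have := integral_rpow_mul_exp_neg_mul_rpow two_pos (by linarith : -1 < 2 * c - 1) (inv_pos.2 hb)
  rw [show -(2 * c - 1 + 1) / 2 = -c by ring, show (2 * c - 1 + 1) / 2 = c by ring,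
    inv_rpow hb.le, rpow_neg hb.le, inv_inv] at this
  rw [show b ^ c * Gamma c / 2 = b ^ c * (1 / 2) * Gamma c by ring, ← this]
  refine setIntegral_congr_fun measurableSet_Ioi fun r _ => ?_
  rw [rpow_two, neg_div, div_eq_inv_mul, neg_mul]

theorem integral_comp_dotProduct_self {ι : Type*} [Fintype ι] [Nonempty ι] (h : ℝ → ℝ) :
    ∫ y : ι → ℝ, h (y ⬝ᵥ y) =
      Fintype.card ι * (√π ^ Fintype.card ι / Gamma (Fintype.card ι / 2 + 1)) *
        ∫ r in Ioi (0 : ℝ), r ^ (Fintype.card ι - 1) * h (r ^ 2) := by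
  have hnorm : ∀ x : EuclideanSpace ℝ ι, x.ofLp ⬝ᵥ x.ofLp = ‖x‖ ^ 2 := fun x => by
    rw [EuclideanSpace.norm_eq, sq_sqrt (by positivity)]
    simp [dotProduct, Real.norm_eq_abs, sq]
  have hball : volume.real (Metric.ball (0 : EuclideanSpace ℝ ι) 1) =
      √π ^ Fintype.card ι / Gamma (Fintype.card ι / 2 + 1) := by
    rw [measureReal_def, EuclideanSpace.volume_ball, ENNReal.ofReal_one, one_pow, one_mul,
      ENNReal.toReal_ofReal (by positivity)]
  rw [← (EuclideanSpace.volume_preserving_symm_measurableEquiv_toLp ι).integral_comp']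
  simp only [MeasurableEquiv.toLp_symm_apply, hnorm]
  rw [integral_fun_norm_addHaar volume fun r => h (r ^ 2), finrank_euclideanSpace, hball,
    nsmul_eq_mul, smul_eq_mul]
  simp only [smul_eq_mul, mul_assoc]

theorem integral_dotProduct_self_rpow_mul_exp {ι : Type*} [Fintype ι] [Nonempty ι] {b c : ℝ}
    (hb : 0 < b) (hc : 0 < c) :
    ∫ y : ι → ℝ, (y ⬝ᵥ y) ^ (c - Fintype.card ι / 2) * exp (-(y ⬝ᵥ y) / b) =
      π ^ ((Fintype.card ι : ℝ) / 2) * b ^ c * Gamma c / Gamma (Fintype.card ι / 2) := by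
  rw [integral_comp_dotProduct_self fun t => t ^ (c - Fintype.card ι / 2) * exp (-t / b)]
  set n := Fintype.card ι
  have hn : 0 < n := Fintype.card_pos
  have hpolar : ∀ r ∈ Ioi (0 : ℝ),
      r ^ (n - 1) * ((r ^ 2) ^ (c - n / 2) * exp (-r ^ 2 / b)) =
        r ^ (2 * c - 1) * exp (-r ^ 2 / b) :=
    fun r (hr : 0 < r) => by
      rw [← rpow_natCast, ← rpow_natCast r 2, ← rpow_mul hr.le, ← mul_assoc, ← rpow_add hr,
        Nat.cast_sub hn]
      ring_nf
  have hsqrt : √π ^ n = π ^ ((n : ℝ) / 2) := by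
    rw [sqrt_eq_rpow, ← rpow_natCast, ← rpow_mul pi_pos.le, one_div_mul_eq_div]
  rw [setIntegral_congr_fun measurableSet_Ioi hpolar, integral_rpow_mul_exp_neg_sq_div_Ioi hb hc,
    hsqrt, Gamma_add_one (by positivity)]
  field_simp

theorem integral_mul_mul_pEG {q : ℕ} {S : Matrix (Fin q) (Fin q) ℝ} (hS : S.PosDef) {a b : ℝ}
    (ha : 0 < a) (hb : 0 < b) (i j : Fin q) :
    ∫ x : Fin q → ℝ, x i * x j * pEG S a b x = a * b / q * S i j := by
  have : Nonempty (Fin q) := ⟨i⟩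
  set C := Gamma (q / 2) / (π ^ ((q : ℝ) / 2) * Gamma a * b ^ a * S.det ^ ((1 : ℝ) / 2))
  set g : ℝ → ℝ := fun t => t ^ (a - q / 2) * exp (-t / b)
  have hpEG : ∀ x, x i * x j * pEG S a b x = C * (x i * x j * g (x ⬝ᵥ S⁻¹ *ᵥ x)) := fun x => by
    simp only [pEG, g, C]
    ring
  have hg : Measurable g := by fun_prop
  have hGamma_q : 0 < Gamma (q / 2) := Gamma_pos_of_pos (by simpa using i.pos)
  have hsecond : ∫ y : Fin q → ℝ, (y ⬝ᵥ y) * g (y ⬝ᵥ y) =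
      π ^ ((q : ℝ) / 2) * b ^ (a + 1) * Gamma (a + 1) / Gamma (q / 2) := by
    have := integral_dotProduct_self_rpow_mul_exp (ι := Fin q) hb (by linarith : 0 < a + 1)
    rw [Fintype.card_fin] at this
    rw [← this]
    -- off the null set `{0}`, where the junk value `0 ^ 0 = 1` would break `rpow_add_one`
    refine integral_congr_ae ((Measure.ae_ne volume 0).mono fun y hy => ?_)
    dsimp only [g]
    rw [show a + 1 - q / 2 = a - q / 2 + 1 by ring, rpow_add_one (dotProduct_self_eq_zero.not.2 hy)]
    ring
  have hint : Integrable fun y : Fin q → ℝ => (y ⬝ᵥ y) * g (y ⬝ᵥ y) := by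
    refine Integrable.of_integral_ne_zero (hsecond ▸ ?_)
    have := Gamma_pos_of_pos (by linarith : 0 < a + 1)
    positivity
  simp only [hpEG, integral_const_mul]
  rw [hS.integral_mul_mul_comp_dotProduct_inv_mulVec hg hint, hsecond, Fintype.card_fin,
    Gamma_add_one ha.ne', rpow_add_one hb.ne', sqrt_eq_rpow]
  have := Gamma_pos_of_pos ha
  have := hS.det_pos
  simp only [C]
  field_simp

theorem pEG_second_moment_general {q : ℕ}
    {S : Matrix (Fin q) (Fin q) ℝ} (hS : S.PosDef)
    {a b : ℝ} (ha : 0 < a) (hb : 0 < b) :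
    (∀ i j : Fin q,
        ∫ x : Fin q → ℝ, x i * x j * pEG S a b x = a * b / q * S i j) ∧
      (b = q / a → ∀ i j : Fin q,
        ∫ x : Fin q → ℝ, x i * x j * pEG S a b x = S i j) := by
  refine ⟨integral_mul_mul_pEG hS ha hb, fun hba i j => ?_⟩
  have hq : (q : ℝ) ≠ 0 := Nat.cast_ne_zero.2 i.pos.ne'
  rw [integral_mul_mul_pEG hS ha hb i j, hba]
  field_simp

/-- The second moment matrix of the elliptical gamma distribution is `(a·b/q)·Σ`
(entrywise); in particular for `b = q/a` the covariance matrix equals `Σ`. -/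
theorem pEG_second_moment {q : ℕ} (hq : 1 ≤ q)
    {S : Matrix (Fin q) (Fin q) ℝ} (hS : S.PosDef)
    {a b : ℝ} (ha : 0 < a) (hb : 0 < b) :
    (∀ i j : Fin q,
        ∫ x : Fin q → ℝ, x i * x j * pEG S a b x = a * b / q * S i j) ∧
      (b = q / a → ∀ i j : Fin q,
        ∫ x : Fin q → ℝ, x i * x j * pEG S a b x = S i j) :=
  pEG_second_moment_general hS ha hb
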